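/- Let n ≥ 2, let J ∈ ℝ^{n×n} be symmetric (Jᵀ = J), let λ ∈ ℝ be a simple eigenvalue of J (a root of the characteristic polynomial of J of multiplicity exactly one) with eigenvector v ≠ 0, Jv = λv, and let V ∈ ℝ^{n×(n−1)} have orthonormal columns (VᵀV = I_{n−1}) that are orthogonal to v (Vᵀv = 0). Then the spectral norm of Z = V (Vᵀ(J − λI)V)⁻¹ Vᵀ equals the reciprocal of the spectral gap of λ: ‖Z‖₂ = 1 / min{ |μ − λ| : μ is an eigenvalue of J with μ ≠ λ }. -/

import Mathlib

open Matrix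

/-- Euclidean norm of a vector in `ℝⁿ`. -/
noncomputable def e2norm {n : ℕ} (v : Fin n → ℝ) : ℝ := Real.sqrt (∑ i, v i ^ 2)

/-- Frobenius norm of a real matrix. -/
noncomputable def frobNorm {n m : ℕ} (M : Matrix (Fin n) (Fin m) ℝ) : ℝ :=
  Real.sqrt (∑ i, ∑ j, M i j ^ 2)

/-- Spectral norm: the supremum of `‖M x‖` over Euclidean-unit vectors `x`. -/
noncomputable def specNorm {n m : ℕ} (M : Matrix (Fin n) (Fin m) ℝ) : ℝ :=
  sSup ((fun x => e2norm (M.mulVec x)) '' {x : Fin m → ℝ | e2norm x = 1})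

/-! Completing `v / ‖v‖` by the columns of `V` to an orthogonal matrix puts `J` in block
upper-triangular form, so `χ_J = (X - λ) · χ_S` for the compression `S = Vᵀ J V`. As `λ` is a
simple root, no eigenvalue `β i` of `S` equals `λ`, and the eigenvalues of `J` other than `λ`
are exactly the `β i`. Diagonalising `S = Q (diag β) Qᵀ` gives
`Z = (V Q) diag ((β i - λ)⁻¹) (V Q)ᵀ`, and `V Q` has orthonormal columns, so
`‖Z‖₂ = max |β i - λ|⁻¹ = 1 / min |β i - λ|`. -/

open Polynomial

section EuclideanNorm

variable {n k : ℕ}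

lemma e2norm_nonneg (x : Fin n → ℝ) : 0 ≤ e2norm x := Real.sqrt_nonneg _

lemma e2norm_sq (x : Fin n → ℝ) : e2norm x ^ 2 = x ⬝ᵥ x := by
  rw [e2norm, Real.sq_sqrt (Finset.sum_nonneg fun i _ => sq_nonneg (x i))]
  simp [dotProduct, sq]

lemma e2norm_pos {x : Fin n → ℝ} (hx : x ≠ 0) : 0 < e2norm x := by
  refine (e2norm_nonneg x).lt_of_ne fun h => hx (dotProduct_self_eq_zero.mp ?_)
  rw [← e2norm_sq, ← h, sq, zero_mul]

lemma e2norm_smul (c : ℝ) (x : Fin n → ℝ) : e2norm (c • x) = |c| * e2norm x := by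
  simp only [e2norm, Pi.smul_apply, smul_eq_mul, mul_pow, ← Finset.mul_sum]
  rw [Real.sqrt_mul (sq_nonneg c), Real.sqrt_sq_eq_abs]

lemma e2norm_single (i : Fin n) : e2norm (Pi.single i 1) = 1 := by
  simp [e2norm, Pi.single_apply]

lemma e2norm_mulVec_of_orthonormal {B : Matrix (Fin n) (Fin k) ℝ} (hB : Bᵀ * B = 1)
    (y : Fin k → ℝ) : e2norm (B *ᵥ y) = e2norm y := by
  rw [← Real.sqrt_sq (e2norm_nonneg (B *ᵥ y)), e2norm_sq, dotProduct_mulVec, ← mulVec_transpose,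
    mulVec_mulVec, hB, one_mulVec, ← e2norm_sq, Real.sqrt_sq (e2norm_nonneg y)]

lemma e2norm_transpose_mulVec_le {B : Matrix (Fin n) (Fin k) ℝ} (hB : Bᵀ * B = 1)
    (x : Fin n → ℝ) : e2norm (Bᵀ *ᵥ x) ≤ e2norm x := by
  set y := Bᵀ *ᵥ x
  have h : e2norm y ^ 2 ≤ e2norm y * e2norm x :=
    calc e2norm y ^ 2 = y ⬝ᵥ (Bᵀ *ᵥ x) := e2norm_sq y
      _ = (B *ᵥ y) ⬝ᵥ x := by rw [dotProduct_mulVec, vecMul_transpose]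
      _ ≤ e2norm (B *ᵥ y) * e2norm x := Real.sum_mul_le_sqrt_mul_sqrt _ _ _
      _ = e2norm y * e2norm x := by rw [e2norm_mulVec_of_orthonormal hB]
  nlinarith [e2norm_nonneg y, e2norm_nonneg x]

lemma e2norm_diagonal_mulVec_le {d : Fin n → ℝ} {c : ℝ} (hc : 0 ≤ c) (hd : ∀ i, |d i| ≤ c)
    (y : Fin n → ℝ) : e2norm (diagonal d *ᵥ y) ≤ c * e2norm y := by
  rw [← Real.sqrt_sq hc, e2norm, e2norm, ← Real.sqrt_mul (sq_nonneg c), Finset.mul_sum]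
  refine Real.sqrt_le_sqrt (Finset.sum_le_sum fun i _ => ?_)
  rw [mulVec_diagonal, mul_pow]
  exact mul_le_mul_of_nonneg_right (sq_le_sq' (abs_le.mp (hd i)).1 (abs_le.mp (hd i)).2)
    (sq_nonneg _)

end EuclideanNorm

section SpectralNorm

variable {n k : ℕ} {B : Matrix (Fin n) (Fin k) ℝ}

lemma mul_diagonal_mul_transpose_mulVec_single (hB : Bᵀ * B = 1) (d : Fin k → ℝ) (i : Fin k) :
    (B * diagonal d * Bᵀ) *ᵥ (B *ᵥ Pi.single i 1) = d i • B *ᵥ Pi.single i 1 := by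
  rw [← mulVec_mulVec, mulVec_mulVec _ Bᵀ, hB, one_mulVec, ← mulVec_mulVec,
    diagonal_mulVec_single, mul_one, ← mulVec_smul, ← Pi.single_smul, smul_eq_mul, mul_one]

lemma specNorm_mul_diagonal_mul_transpose [Nonempty (Fin k)] (hB : Bᵀ * B = 1)
    (d : Fin k → ℝ) :
    specNorm (B * diagonal d * Bᵀ) = Finset.univ.sup' Finset.univ_nonempty fun i => |d i| := by
  set c := Finset.univ.sup' Finset.univ_nonempty fun i => |d i|
  obtain ⟨i, -, hi⟩ := Finset.exists_mem_eq_sup' Finset.univ_nonempty fun i => |d i|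
  have hd : ∀ j, |d j| ≤ c := fun j => Finset.le_sup' (fun i => |d i|) (Finset.mem_univ j)
  have hc : 0 ≤ c := (abs_nonneg _).trans (hd i)
  refine IsGreatest.csSup_eq ⟨⟨B *ᵥ Pi.single i 1, ?_, ?_⟩, ?_⟩
  · show e2norm _ = 1
    rw [e2norm_mulVec_of_orthonormal hB, e2norm_single]
  · show e2norm _ = c
    rw [mul_diagonal_mul_transpose_mulVec_single hB, e2norm_smul,
      e2norm_mulVec_of_orthonormal hB, e2norm_single, mul_one]
    exact hi.symm
  · rintro _ ⟨x, hx, rfl⟩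
    calc e2norm ((B * diagonal d * Bᵀ) *ᵥ x) = e2norm (diagonal d *ᵥ (Bᵀ *ᵥ x)) := by
          rw [← mulVec_mulVec, ← mulVec_mulVec, e2norm_mulVec_of_orthonormal hB]
      _ ≤ c * e2norm (Bᵀ *ᵥ x) := e2norm_diagonal_mulVec_le hc hd _
      _ ≤ c * e2norm x := mul_le_mul_of_nonneg_left (e2norm_transpose_mulVec_le hB x) hc
      _ = c := by rw [hx, mul_one]

end SpectralNorm

lemma Finset.sup'_inv_eq_inv_inf' {ι : Type*} {s : Finset ι} (hs : s.Nonempty) {f : ι → ℝ}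
    (hf : ∀ i ∈ s, 0 < f i) : s.sup' hs (fun i => (f i)⁻¹) = (s.inf' hs f)⁻¹ := by
  obtain ⟨i, hi, hmin⟩ := s.exists_mem_eq_inf' hs f
  refine le_antisymm (Finset.sup'_le _ _ fun j hj => ?_) ?_
  · exact inv_anti₀ (hmin ▸ hf i hi) (Finset.inf'_le f hj)
  · rw [hmin]
    exact Finset.le_sup' (fun j => (f j)⁻¹) hi

section Charpoly

variable {R : Type*} [CommRing R] {m k : Type*} [Fintype m] [Fintype k] [DecidableEq m]
  [DecidableEq k]

lemma Matrix.charpoly_transpose_mul_mul_of_orthonormal (J : Matrix m m R)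
    {W : Matrix m k R} (hW : Wᵀ * W = 1) (hcard : Fintype.card m = Fintype.card k) :
    (Wᵀ * J * W).charpoly = J.charpoly := by
  have hWWt : W * Wᵀ = 1 := (mul_eq_one_comm_of_card_eq k m R hcard.symm).mp hW
  have h := charpoly_mul_comm' Wᵀ (J * W)
  rw [Matrix.mul_assoc J, hWWt, Matrix.mul_one, hcard, ← Matrix.mul_assoc] at h
  exact (isRegular_X_pow _).left.eq_iff.mp h

lemma Matrix.charpoly_eq_X_sub_C_mul_charpoly_compression (J : Matrix m m R) {lam : R}
    {u : m → R} (hu : u ⬝ᵥ u = 1) (hJu : J *ᵥ u = lam • u) {V : Matrix m k R}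
    (hV : Vᵀ * V = 1) (hVu : Vᵀ *ᵥ u = 0) (hcard : Fintype.card m = Fintype.card k + 1) :
    J.charpoly = (X - C lam) * (Vᵀ * J * V).charpoly := by
  set U : Matrix m Unit R := replicateCol Unit u
  have hUU : Uᵀ * U = 1 := by ext; simp [U, hu]
  have hVU : Vᵀ * U = 0 := by rw [← replicateCol_mulVec, hVu, replicateCol_zero]
  have hJU : J * U = lam • U := by rw [← replicateCol_mulVec, hJu, replicateCol_smul]
  have hUV : Uᵀ * V = 0 := by rw [← transpose_transpose V, ← transpose_mul, hVU, transpose_zero]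
  have hW : (fromCols U V)ᵀ * fromCols U V = 1 := by
    rw [transpose_fromCols, fromRows_mul_fromCols, hUU, hV, hVU, hUV, fromBlocks_one]
  have hblocks : (fromCols U V)ᵀ * J * fromCols U V =
      fromBlocks (lam • 1) (Uᵀ * J * V) 0 (Vᵀ * J * V) := by
    rw [transpose_fromCols, fromRows_mul, fromRows_mul_fromCols, Matrix.mul_assoc Uᵀ, hJU,
      Matrix.mul_assoc Vᵀ, hJU, Matrix.mul_smul, Matrix.mul_smul, hUU, hVU, smul_zero]
  have hcard' : Fintype.card m = Fintype.card (Unit ⊕ k) := by simp [hcard, add_comm]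
  rw [← charpoly_transpose_mul_mul_of_orthonormal J hW hcard', hblocks,
    charpoly_fromBlocks_zero₂₁]
  congr 1
  simp [charpoly, det_unique]
end Charpoly

lemma Polynomial.not_isRoot_of_rootMultiplicity_X_sub_C_mul_eq_one {R : Type*} [CommRing R]
    {p : R[X]} {a : R} (hp : p ≠ 0) (h : rootMultiplicity a ((X - C a) * p) = 1) :
    ¬ p.IsRoot a := by
  rw [mul_comm, ← pow_one (X - C a), rootMultiplicity_mul_X_sub_C_pow hp, add_eq_right,
    rootMultiplicity_eq_zero_iff] at h
  exact fun hroot => hp (h hroot)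

namespace Matrix.IsHermitian

variable {k : Type*} [Fintype k] [DecidableEq k] {A : Matrix k k ℝ} (hA : A.IsHermitian)

lemma transpose_eigenvectorUnitary_mul_self :
    (hA.eigenvectorUnitary : Matrix k k ℝ)ᵀ * hA.eigenvectorUnitary = 1 := by
  simpa [star_eq_conjTranspose, conjTranspose_eq_transpose_of_trivial] using
    Unitary.coe_star_mul_self hA.eigenvectorUnitary

lemma eigenvectorUnitary_mul_transpose_self :
    (hA.eigenvectorUnitary : Matrix k k ℝ) * (hA.eigenvectorUnitary : Matrix k k ℝ)ᵀ = 1 := by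
  simpa [star_eq_conjTranspose, conjTranspose_eq_transpose_of_trivial] using
    Unitary.coe_mul_star_self hA.eigenvectorUnitary

lemma eq_eigenvectorUnitary_mul_diagonal_mul_transpose :
    A = (hA.eigenvectorUnitary : Matrix k k ℝ) * diagonal hA.eigenvalues *
      (hA.eigenvectorUnitary : Matrix k k ℝ)ᵀ := by
  simpa [Unitary.conjStarAlgAut_apply, star_eq_conjTranspose,
    conjTranspose_eq_transpose_of_trivial] using hA.spectral_theorem

lemma isRoot_charpoly_iff (μ : ℝ) : A.charpoly.IsRoot μ ↔ ∃ i, hA.eigenvalues i = μ := by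
  simp [hA.charpoly_eq, eval_prod, Finset.prod_eq_zero_iff, sub_eq_zero, eq_comm (a := μ)]

lemma inv_sub_smul_one {lam : ℝ} (hlam : ∀ i, hA.eigenvalues i ≠ lam) :
    (A - lam • 1)⁻¹ = (hA.eigenvectorUnitary : Matrix k k ℝ) *
      diagonal (fun i => (hA.eigenvalues i - lam)⁻¹) * (hA.eigenvectorUnitary : Matrix k k ℝ)ᵀ := by
  set Q : Matrix k k ℝ := (hA.eigenvectorUnitary : Matrix k k ℝ)
  have hsub : A - lam • 1 = Q * diagonal (fun i => hA.eigenvalues i - lam) * Qᵀ := by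
    rw [← diagonal_sub, ← smul_one_eq_diagonal, Matrix.mul_sub, Matrix.sub_mul, Matrix.mul_smul,
      Matrix.smul_mul, Matrix.mul_one, hA.eigenvectorUnitary_mul_transpose_self,
      ← hA.eq_eigenvectorUnitary_mul_diagonal_mul_transpose]
  refine inv_eq_right_inv ?_
  have hcancel : (fun i => (hA.eigenvalues i - lam) * (hA.eigenvalues i - lam)⁻¹) = fun _ => 1 :=
    funext fun i => mul_inv_cancel₀ (sub_ne_zero.mpr (hlam i))
  simp only [hsub, Matrix.mul_assoc]
  rw [← Matrix.mul_assoc Qᵀ, hA.transpose_eigenvectorUnitary_mul_self, Matrix.one_mul,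
    ← Matrix.mul_assoc (diagonal _), diagonal_mul_diagonal, hcancel, diagonal_one,
    Matrix.one_mul, hA.eigenvectorUnitary_mul_transpose_self]

end Matrix.IsHermitian

/-- for symmetric `J` with simple eigenvalue `λ`, eigenvector
`v`, and `V` with orthonormal columns orthogonal to `v`, the spectral norm of
`Z = V (Vᵀ(J−λI)V)⁻¹ Vᵀ` equals the reciprocal of the spectral gap of `λ`. -/
theorem spectral_norm_Z_eq_inv_spectral_gap
    {n : ℕ} (hn : 2 ≤ n)
    (J : Matrix (Fin n) (Fin n) ℝ) (hJ : Jᵀ = J) (lam : ℝ)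
    (hsimple : Polynomial.rootMultiplicity lam J.charpoly = 1)
    (v : Fin n → ℝ) (hv : v ≠ 0) (heig : J.mulVec v = lam • v)
    (V : Matrix (Fin n) (Fin (n - 1)) ℝ)
    (hVV : Vᵀ * V = 1) (hVv : Vᵀ.mulVec v = 0) :
    specNorm (V * (Vᵀ * (J - lam • 1) * V)⁻¹ * Vᵀ) =
      1 / sInf {d : ℝ | ∃ mu : ℝ,
        J.charpoly.IsRoot mu ∧ mu ≠ lam ∧ d = |mu - lam|} := by
  have : Nonempty (Fin (n - 1)) := ⟨⟨0, by omega⟩⟩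
  obtain ⟨u, hu, hJu, hVu⟩ : ∃ u : Fin n → ℝ, u ⬝ᵥ u = 1 ∧ J *ᵥ u = lam • u ∧ Vᵀ *ᵥ u = 0 := by
    refine ⟨(e2norm v)⁻¹ • v, ?_, by rw [mulVec_smul, heig, smul_comm],
      by rw [mulVec_smul, hVv, smul_zero]⟩
    rw [← e2norm_sq, e2norm_smul, abs_inv, abs_of_pos (e2norm_pos hv),
      inv_mul_cancel₀ (e2norm_pos hv).ne', one_pow]
  have hS : (Vᵀ * J * V).IsHermitian := by
    rw [IsHermitian, conjTranspose_eq_transpose_of_trivial, transpose_mul, transpose_mul,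
      transpose_transpose, hJ, Matrix.mul_assoc]
  set β := hS.eigenvalues
  set Q : Matrix (Fin (n - 1)) (Fin (n - 1)) ℝ := hS.eigenvectorUnitary.val
  have hfactor : J.charpoly = (X - C lam) * (Vᵀ * J * V).charpoly :=
    J.charpoly_eq_X_sub_C_mul_charpoly_compression hu hJu hVV hVu (by simp; omega)
  have hβ : ∀ i, β i ≠ lam := fun i h =>
    not_isRoot_of_rootMultiplicity_X_sub_C_mul_eq_one (charpoly_monic _).ne_zero
      (hfactor ▸ hsimple) ((hS.isRoot_charpoly_iff lam).mpr ⟨i, h⟩)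
  have hgap : {d : ℝ | ∃ mu : ℝ, J.charpoly.IsRoot mu ∧ mu ≠ lam ∧ d = |mu - lam|} =
      Set.range fun i => |β i - lam| := by
    ext d
    simp only [hfactor, root_mul, root_X_sub_C, hS.isRoot_charpoly_iff, Set.mem_ofPred_eq,
      Set.mem_range]
    constructor
    · rintro ⟨mu, hroot | ⟨i, rfl⟩, hmu, rfl⟩
      · exact absurd hroot.symm hmu
      · exact ⟨i, rfl⟩
    · rintro ⟨i, rfl⟩
      exact ⟨β i, Or.inr ⟨i, rfl⟩, hβ i, rfl⟩
  have hZ : V * (Vᵀ * (J - lam • 1) * V)⁻¹ * Vᵀ =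
      V * Q * diagonal (fun i => (β i - lam)⁻¹) * (V * Q)ᵀ := by
    rw [Matrix.mul_sub, Matrix.sub_mul, Matrix.mul_smul, Matrix.smul_mul, Matrix.mul_one, hVV,
      hS.inv_sub_smul_one hβ, transpose_mul]
    simp only [← Matrix.mul_assoc]
    rfl
  have hVQ : (V * Q)ᵀ * (V * Q) = 1 := by
    rw [transpose_mul, Matrix.mul_assoc, ← Matrix.mul_assoc Vᵀ, hVV, Matrix.one_mul,
      hS.transpose_eigenvectorUnitary_mul_self]
  rw [hZ, specNorm_mul_diagonal_mul_transpose hVQ, hgap, ← Set.image_univ, ← Finset.coe_univ,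
    ← Finset.inf'_eq_csInf_image _ Finset.univ_nonempty, one_div,
    ← Finset.sup'_inv_eq_inv_inf' _ fun i _ => abs_pos.mpr (sub_ne_zero.mpr (hβ i))]
  simp only [abs_inv]
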